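/- Let (M,d) be a separable metric space, μ a Borel regular Radon measure, E ⊆ M a Borel set, and t > 0. If Θ*_k(μ,x) ≤ t for every x ∈ E, then μ ⌞ E ≤ 2^k · t · ℋ^k ⌞ E, where ℋ^k is the k-dimensional Hausdorff measure. In particular, Θ*_k(μ,x) < +∞ for ℋ^k-almost every x ∈ M. -/

import Mathlib

open MeasureTheory Metric Filter Topology
open scoped ENNReal MeasureTheory

/-- The normalizing constant ω_k = π^{k/2} / Γ(1 + k/2). -/
noncomputable def hausdorffNormalization (k : ℝ) : ℝ :=
  Real.pi ^ (k / 2) / Real.Gamma (1 + k / 2)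

/-- The k-dimensional Hausdorff measure ℋ^k with the classical normalization
ω_k/2^k (Mathlib's `μH[k]` is unnormalized). -/
noncomputable def normHausdorff (M : Type*) [MetricSpace M] [MeasurableSpace M]
    [BorelSpace M] (k : ℝ) : Measure M :=
  ENNReal.ofReal (hausdorffNormalization k / 2 ^ k) • μH[k]

/-- The upper k-density Θ*_k(μ,x) = limsup_{r→0⁺} μ(B(x,r))/(ω_k r^k). -/
noncomputable def upperDensity {M : Type*} [MetricSpace M] [MeasurableSpace M]
    (k : ℝ) (μ : Measure M) (x : M) : ℝ≥0∞ :=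
  Filter.limsup
    (fun r : ℝ => μ (closedBall x r) / ENNReal.ofReal (hausdorffNormalization k * r ^ k))
    (𝓝[>] 0)

/-!
Both halves are covering arguments at small scales.

Where `Θ*_k(μ, ·) ≤ t < t'`, small closed balls `B(x, r)` centred in `E` carry mass at most
`t' ω_k r^k`. A set of diameter `D` meeting `E` lies in such a ball of radius just above `D`,
and Mathlib's `μH[k]` gauges it by `D^k = 2^k (D/2)^k`, so `μ ≤ t' ω_k μH[k] = 2^k t' ℋ^k` on
subsets of `E`; let `t' ↓ t`.

Where `Θ*_k(μ, ·) = ∞` inside an open set `V` of finite measure, the Vitali covering lemma gives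
disjoint balls `B(x, r) ⊆ V` with `μ(B(x, r)) ≥ n ω_k r^k` whose fourfold enlargements cover, so
`μH[k] ≤ 8^k μ(V) / (n ω_k)` for every `n`.

The degenerate exponents are elementary: for `k < 0` the density is finite everywhere because
`r^k ≥ 1` for `r ≤ 1`, and when `ω_k ≤ 0` (which happens for some `k < -2`) both `ℋ^k` and the
restriction of `μ` to the set where the density is finite vanish.
-/

open Set TopologicalSpace

theorem isLocallyFiniteMeasure_of_outerRegular {α : Type*} [TopologicalSpace α]
    [MeasurableSpace α] (μ : Measure α) [μ.OuterRegular] [IsFiniteMeasureOnCompacts μ] :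
    IsLocallyFiniteMeasure μ where
  finiteAtNhds x := by
    obtain ⟨U, hxU, hU, hμU⟩ := Set.exists_isOpen_lt_of_lt {x} (μ {x} + 1)
      (ENNReal.lt_add_right isCompact_singleton.measure_lt_top.ne one_ne_zero)
    exact ⟨U, hU.mem_nhds (hxU rfl),
      hμU.trans (ENNReal.add_lt_top.2 ⟨isCompact_singleton.measure_lt_top, ENNReal.one_lt_top⟩)⟩

theorem ediam_closedBall_le {X : Type*} [PseudoMetricSpace X] (x : X) (R : ℝ) :
    ediam (closedBall x R) ≤ ENNReal.ofReal (2 * R) :=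
  ediam_le_of_forall_dist_le fun y hy z hz =>
    (dist_triangle_right y z x).trans (by linarith [mem_closedBall.1 hy, mem_closedBall.1 hz])

section upperDensity

variable {X : Type*} [MetricSpace X] [MeasurableSpace X] {μ : Measure X} {k : ℝ}

theorem ofReal_hausdorffNormalization_mul_rpow {r : ℝ} (hr : 0 < r) :
    ENNReal.ofReal (hausdorffNormalization k * r ^ k) =
      ENNReal.ofReal (hausdorffNormalization k) * ENNReal.ofReal r ^ k := by
  rw [ENNReal.ofReal_mul' (Real.rpow_nonneg hr.le k), ENNReal.ofReal_rpow_of_pos hr]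

theorem eventually_measure_closedBall_le_of_upperDensity_lt {x : X} {c : ℝ≥0∞}
    (h : upperDensity k μ x < c) (hc : c ≠ ∞) :
    ∀ᶠ r in 𝓝[>] 0, μ (closedBall x r) ≤
      c * ENNReal.ofReal (hausdorffNormalization k) * ENNReal.ofReal r ^ k := by
  filter_upwards [eventually_lt_of_limsup_lt h, self_mem_nhdsWithin] with r hr (hr0 : 0 < r)
  rw [mul_assoc, ← ofReal_hausdorffNormalization_mul_rpow hr0]
  exact (ENNReal.div_le_iff_le_mul (Or.inr hc) (Or.inl ENNReal.ofReal_ne_top)).1 hr.le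

theorem frequently_le_measure_closedBall_of_lt_upperDensity {x : X} {c : ℝ≥0∞}
    (h : c < upperDensity k μ x) :
    ∃ᶠ r in 𝓝[>] 0, c * ENNReal.ofReal (hausdorffNormalization k) * ENNReal.ofReal r ^ k ≤
      μ (closedBall x r) := by
  refine ((frequently_lt_of_lt_limsup (by isBoundedDefault) h).and_eventually
    self_mem_nhdsWithin).mono fun r ⟨hr, (hr0 : 0 < r)⟩ => ?_
  rw [mul_assoc, ← ofReal_hausdorffNormalization_mul_rpow hr0]
  exact ((ENNReal.lt_div_iff_mul_lt (Or.inr h.ne_top) (Or.inl ENNReal.ofReal_ne_top)).1 hr).le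

theorem upperDensity_lt_top_of_neg [IsLocallyFiniteMeasure μ] (hk : k < 0)
    (hω : 0 < hausdorffNormalization k) (x : X) : upperDensity k μ x < ∞ := by
  obtain ⟨U, hU, hμU⟩ := μ.finiteAt_nhds x
  obtain ⟨ρ, hρ, hρU⟩ := nhds_basis_closedBall.mem_iff.1 hU
  have hev : ∀ᶠ r in 𝓝[>] 0, μ (closedBall x r) /
      ENNReal.ofReal (hausdorffNormalization k * r ^ k) ≤
        μ U / ENNReal.ofReal (hausdorffNormalization k) := by
    filter_upwards [Ioo_mem_nhdsGT (lt_min hρ one_pos)] with r ⟨hr0, hr⟩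
    refine ENNReal.div_le_div
      (measure_mono ((closedBall_subset_closedBall (hr.le.trans (min_le_left _ _))).trans hρU))
      (ENNReal.ofReal_le_ofReal (le_mul_of_one_le_right hω.le ?_))
    exact Real.one_le_rpow_of_pos_of_le_one_of_nonpos hr0 (hr.le.trans (min_le_right _ _)) hk.le
  exact (limsup_le_of_le (by isBoundedDefault) hev).trans_lt
    (ENNReal.div_lt_top hμU.ne (ENNReal.ofReal_pos.2 hω).ne')

theorem measure_eq_zero_of_eventually_measure_closedBall_eq_zero [SeparableSpace X] {A : Set X}
    (h : ∀ x ∈ A, ∀ᶠ r in 𝓝[>] 0, μ (closedBall x r) = 0) : μ A = 0 :=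
  measure_null_of_locally_null A fun x hx => by
    obtain ⟨r, hr, hr0 : 0 < r⟩ := ((h x hx).and self_mem_nhdsWithin).exists
    exact ⟨closedBall x r, mem_nhdsWithin_of_mem_nhds (closedBall_mem_nhds x hr0), hr⟩

end upperDensity

section hausdorffMeasure

variable {X : Type*} [MetricSpace X] [MeasurableSpace X] [BorelSpace X] {μ : Measure X} {k : ℝ}

theorem measure_le_mul_hausdorffMeasure_of_measure_closedBall_le {c : ℝ≥0∞} (hc0 : c ≠ 0)
    (hc : c ≠ ∞) {A : Set X} {δ : ℝ} (hδ : 0 < δ)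
    (h : ∀ x ∈ A, ∀ r ∈ Ioo 0 δ, μ (closedBall x r) ≤ c * ENNReal.ofReal r ^ k) :
    μ A ≤ c * μH[k] A := by
  have hsmall : ∀ s : Set X, ediam s ≤ ENNReal.ofReal (δ / 2) →
      μ (s ∩ A) ≤ c * ediam s ^ k := by
    intro s hs
    rcases (s ∩ A).eq_empty_or_nonempty with hsA | ⟨x, hxs, hxA⟩
    · simp [hsA]
    have hD : ediam s ≠ ∞ := ne_top_of_le_ne_top ENNReal.ofReal_ne_top hs
    have hDδ : (ediam s).toReal < δ :=
      (ENNReal.toReal_le_of_le_ofReal (by positivity) hs).trans_lt (half_lt_self hδ)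
    -- `s` lies in every closed ball around `x` of radius larger than its diameter
    have hball : ∀ r ∈ Ioo (ediam s).toReal δ, μ (s ∩ A) ≤ c * ENNReal.ofReal r ^ k := by
      refine fun r hr => (measure_mono fun y hy => ?_).trans (h x hxA r ⟨?_, hr.2⟩)
      · rw [mem_closedBall, dist_edist]
        exact (ENNReal.toReal_mono hD (edist_le_ediam_of_mem hy.1 hxs)).trans hr.1.le
      · exact ENNReal.toReal_nonneg.trans_lt hr.1
    have hlim : Tendsto (fun r => c * ENNReal.ofReal r ^ k) (𝓝[>] (ediam s).toReal)
        (𝓝 (c * ediam s ^ k)) := by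
      have hcont : Continuous fun r : ℝ => c * ENNReal.ofReal r ^ k :=
        (ENNReal.continuous_const_mul hc).comp
          (ENNReal.continuous_rpow_const.comp ENNReal.continuous_ofReal)
      simpa only [ENNReal.ofReal_toReal hD] using
        (hcont.tendsto (ediam s).toReal).mono_left nhdsWithin_le_nhds
    exact ge_of_tendsto hlim (eventually_of_mem (Ioo_mem_nhdsGT hDδ) hball)
  have hle := OuterMeasure.le_mkMetric (c • fun d => d ^ k)
    (OuterMeasure.restrict A μ.toOuterMeasure) (ENNReal.ofReal (δ / 2)) (by positivity)
    fun s hs => by simpa [OuterMeasure.restrict_apply] using hsmall s hs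
  rw [OuterMeasure.mkMetric_smul _ hc hc0] at hle
  simpa [OuterMeasure.restrict_apply, Measure.hausdorffMeasure,
    ← Measure.mkMetric_toOuterMeasure] using hle A

theorem measure_le_mul_hausdorffMeasure_of_eventually_measure_closedBall_le {c : ℝ≥0∞}
    (hc0 : c ≠ 0) (hc : c ≠ ∞) {A : Set X}
    (h : ∀ x ∈ A, ∀ᶠ r in 𝓝[>] 0, μ (closedBall x r) ≤ c * ENNReal.ofReal r ^ k) :
    μ A ≤ c * μH[k] A := by
  set B : ℕ → Set X := fun n => {x ∈ A | ∀ r ∈ Ioo 0 (1 / (n + 1 : ℝ)),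
    μ (closedBall x r) ≤ c * ENNReal.ofReal r ^ k}
  have hB : Monotone B := fun m n hmn x ⟨hxA, hx⟩ =>
    ⟨hxA, fun r hr => hx r ⟨hr.1, hr.2.trans_le (Nat.one_div_le_one_div hmn)⟩⟩
  have hAB : A ⊆ ⋃ n, B n := fun x hx => by
    obtain ⟨u, hu : 0 < u, hxu⟩ := mem_nhdsGT_iff_exists_Ioo_subset.1 (h x hx)
    obtain ⟨n, hn⟩ := exists_nat_one_div_lt hu
    exact mem_iUnion.2 ⟨n, hx, fun r hr => hxu ⟨hr.1, hr.2.trans hn⟩⟩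
  calc μ A ≤ μ (⋃ n, B n) := measure_mono hAB
    _ = ⨆ n, μ (B n) := hB.measure_iUnion
    _ ≤ c * μH[k] A := iSup_le fun n =>
      (measure_le_mul_hausdorffMeasure_of_measure_closedBall_le hc0 hc Nat.one_div_pos_of_nat
        fun x hx => hx.2).trans (by gcongr; exact sep_subset _ _)

theorem measure_le_mul_hausdorffMeasure_of_upperDensity_le [SeparableSpace X] {t : ℝ≥0∞}
    (ht0 : t ≠ 0) (ht : t ≠ ∞) {A : Set X} (h : ∀ x ∈ A, upperDensity k μ x ≤ t) :
    μ A ≤ t * ENNReal.ofReal (hausdorffNormalization k) * μH[k] A := by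
  have hev : ∀ t' ∈ Ioo t ∞, ∀ x ∈ A, ∀ᶠ r in 𝓝[>] 0, μ (closedBall x r) ≤
      t' * ENNReal.ofReal (hausdorffNormalization k) * ENNReal.ofReal r ^ k :=
    fun t' ht' x hx =>
      eventually_measure_closedBall_le_of_upperDensity_lt ((h x hx).trans_lt ht'.1) ht'.2.ne
  rcases le_or_gt (hausdorffNormalization k) 0 with hω | hω
  · obtain ⟨t', ht'⟩ := exists_between ht.lt_top
    rw [ENNReal.ofReal_of_nonpos hω, mul_zero, zero_mul, nonpos_iff_eq_zero]
    refine measure_eq_zero_of_eventually_measure_closedBall_eq_zero fun x hx => ?_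
    filter_upwards [hev t' ht' x hx] with r hr
    simpa [ENNReal.ofReal_of_nonpos hω] using hr
  have hbound : ∀ t' ∈ Ioo t ∞,
      μ A ≤ t' * ENNReal.ofReal (hausdorffNormalization k) * μH[k] A := fun t' ht' =>
    measure_le_mul_hausdorffMeasure_of_eventually_measure_closedBall_le
      (mul_ne_zero (pos_of_gt ht'.1).ne' (ENNReal.ofReal_pos.2 hω).ne')
      (ENNReal.mul_ne_top ht'.2.ne ENNReal.ofReal_ne_top) (hev t' ht')
  have hlim : Tendsto (fun t' => t' * ENNReal.ofReal (hausdorffNormalization k) * μH[k] A)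
      (𝓝[>] t) (𝓝 (t * ENNReal.ofReal (hausdorffNormalization k) * μH[k] A)) := by
    simp_rw [mul_assoc]
    exact ENNReal.Tendsto.mul_const (tendsto_nhdsWithin_of_tendsto_nhds tendsto_id) (Or.inl ht0)
  have := nhdsGT_neBot_of_exists_gt ⟨∞, ht.lt_top⟩
  exact ge_of_tendsto hlim (eventually_of_mem (Ioo_mem_nhdsGT ht.lt_top) hbound)

end hausdorffMeasure

section vitali

variable {X : Type*} [MetricSpace X] [MeasurableSpace X] [BorelSpace X] [SeparableSpace X]
  {μ : Measure X} {k : ℝ}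

theorem exists_closedBall_cover_of_frequently_le_measure_closedBall {c : ℝ≥0∞} {V A : Set X}
    (hV : IsOpen V) (hAV : A ⊆ V)
    (h : ∀ x ∈ A, ∃ᶠ r in 𝓝[>] 0, c * ENNReal.ofReal r ^ k ≤ μ (closedBall x r))
    {δ : ℝ} (hδ : 0 < δ) :
    ∃ (u : Set X) (w : X → ℝ), u.Countable ∧ (∀ b ∈ u, w b ∈ Ioc 0 δ) ∧
      A ⊆ ⋃ b ∈ u, closedBall b (4 * w b) ∧ c * ∑' b : u, ENNReal.ofReal (w b) ^ k ≤ μ V := by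
  have hrad : ∀ x ∈ A, ∃ r ∈ Ioc 0 δ,
      closedBall x r ⊆ V ∧ c * ENNReal.ofReal r ^ k ≤ μ (closedBall x r) := by
    intro x hx
    obtain ⟨ε, hε, hεV⟩ := nhds_basis_closedBall.mem_iff.1 (hV.mem_nhds (hAV hx))
    obtain ⟨r, hr, hr0, hrε⟩ := ((h x hx).and_eventually (Ioo_mem_nhdsGT (lt_min hδ hε))).exists
    exact ⟨r, ⟨hr0, hrε.le.trans (min_le_left _ _)⟩,
      (closedBall_subset_closedBall (hrε.le.trans (min_le_right _ _))).trans hεV, hr⟩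
  choose! w hw hwV hwμ using hrad
  obtain ⟨u, huA, hdisj, hcov⟩ := Vitali.exists_disjoint_subfamily_covering_enlargement_closedBall
    A id w δ (fun a ha => (hw a ha).2) 4 (by norm_num)
  have hu : u.Countable := hdisj.countable_of_nonempty_interior fun b hb =>
    (nonempty_ball.2 (hw b (huA hb)).1).mono ball_subset_interior_closedBall
  refine ⟨u, w, hu, fun b hb => hw b (huA hb), fun x hx => ?_, ?_⟩
  · obtain ⟨b, hb, hxb⟩ := hcov x hx
    exact mem_biUnion hb (hxb (mem_closedBall_self (hw x hx).1.le))
  have := hu.to_subtype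
  calc c * ∑' b : u, ENNReal.ofReal (w b) ^ k = ∑' b : u, c * ENNReal.ofReal (w b) ^ k :=
        ENNReal.tsum_mul_left.symm
    _ ≤ ∑' b : u, μ (closedBall (b : X) (w b)) := ENNReal.tsum_le_tsum fun b => hwμ b (huA b.2)
    _ = μ (⋃ b ∈ u, closedBall b (w b)) :=
        (measure_biUnion hu hdisj fun _ _ => measurableSet_closedBall).symm
    _ ≤ μ V := measure_mono (iUnion₂_subset fun b hb => hwV b (huA hb))

theorem mul_hausdorffMeasure_le_of_frequently_le_measure_closedBall (hk : 0 ≤ k) {c : ℝ≥0∞}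
    (hc : c ≠ ∞) {V A : Set X} (hV : IsOpen V) (hAV : A ⊆ V)
    (h : ∀ x ∈ A, ∃ᶠ r in 𝓝[>] 0, c * ENNReal.ofReal r ^ k ≤ μ (closedBall x r)) :
    c * μH[k] A ≤ 8 ^ k * μ V := by
  rcases eq_or_ne c 0 with rfl | hc0
  · simp
  choose u w hu hw hcov hsum using fun n : ℕ =>
    exists_closedBall_cover_of_frequently_le_measure_closedBall hV hAV h
      (Nat.one_div_pos_of_nat (n := n))
  have := fun n => (hu n).to_subtype
  have hdiam : ∀ n (b : u n),
      ediam (closedBall (b : X) (4 * w n b)) ≤ 8 * ENNReal.ofReal (w n b) := fun n b => by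
    rw [← ENNReal.ofReal_ofNat, ← ENNReal.ofReal_mul (by norm_num)]
    exact (ediam_closedBall_le _ _).trans_eq (by ring_nf)
  have hS : ∀ n, ∑' b : u n, ediam (closedBall (b : X) (4 * w n b)) ^ k ≤ 8 ^ k * μ V / c := by
    intro n
    rw [ENNReal.le_div_iff_mul_le (Or.inl hc0) (Or.inl hc), mul_comm]
    calc c * ∑' b : u n, ediam (closedBall (b : X) (4 * w n b)) ^ k
        ≤ c * ∑' b : u n, 8 ^ k * ENNReal.ofReal (w n b) ^ k := by
          gcongr with b
          rw [← ENNReal.mul_rpow_of_nonneg _ _ hk]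
          exact ENNReal.rpow_le_rpow (hdiam n b) hk
      _ = 8 ^ k * (c * ∑' b : u n, ENNReal.ofReal (w n b) ^ k) := by
          rw [ENNReal.tsum_mul_left]; ring
      _ ≤ 8 ^ k * μ V := by gcongr; exact hsum n
  have hr : Tendsto (fun n : ℕ => 8 * ENNReal.ofReal (1 / (n + 1))) atTop (𝓝 0) := by
    simpa using ENNReal.Tendsto.const_mul
      (ENNReal.tendsto_ofReal tendsto_one_div_add_atTop_nhds_zero_nat) (Or.inr ENNReal.ofNat_ne_top)
  have hH : μH[k] A ≤ 8 ^ k * μ V / c :=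
    (Measure.hausdorffMeasure_le_liminf_tsum k A _ hr
      (fun n (b : u n) => closedBall (b : X) (4 * w n b))
      (Eventually.of_forall fun n b => (hdiam n b).trans (by gcongr; exact (hw n b b.2).2))
      (Eventually.of_forall fun n => (hcov n).trans_eq (biUnion_eq_iUnion _ _))).trans
      (liminf_le_of_frequently_le (Frequently.of_forall hS))
  calc c * μH[k] A ≤ c * (8 ^ k * μ V / c) := by gcongr
    _ ≤ 8 ^ k * μ V := ENNReal.mul_div_le

theorem hausdorffMeasure_eq_zero_of_upperDensity_eq_top (hk : 0 ≤ k)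
    (hω : 0 < hausdorffNormalization k) {V A : Set X} (hV : IsOpen V) (hμV : μ V ≠ ∞)
    (hAV : A ⊆ V) (hA : ∀ x ∈ A, upperDensity k μ x = ∞) : μH[k] A = 0 := by
  have hbound : ∀ n : ℕ,
      n * (ENNReal.ofReal (hausdorffNormalization k) * μH[k] A) ≤ 8 ^ k * μ V := fun n => by
    rw [← mul_assoc]
    refine mul_hausdorffMeasure_le_of_frequently_le_measure_closedBall hk
      (ENNReal.mul_ne_top (ENNReal.natCast_ne_top n) ENNReal.ofReal_ne_top) hV hAV fun x hx => ?_
    exact frequently_le_measure_closedBall_of_lt_upperDensity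
      ((hA x hx).symm ▸ ENNReal.natCast_lt_top n)
  by_contra hA0
  obtain ⟨n, hn⟩ := ENNReal.exists_nat_mul_gt
    (mul_ne_zero (ENNReal.ofReal_pos.2 hω).ne' hA0)
    (ENNReal.mul_ne_top (ENNReal.rpow_ne_top_of_nonneg hk (ENNReal.ofNat_ne_top (n := 8))) hμV)
  exact (hbound n).not_gt hn

theorem ae_hausdorffMeasure_upperDensity_lt_top [IsLocallyFiniteMeasure μ]
    (hω : 0 < hausdorffNormalization k) :
    ∀ᵐ x ∂μH[k], upperDensity k μ x < ∞ := by
  rcases lt_or_ge k 0 with hk | hk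
  · exact ae_of_all _ (upperDensity_lt_top_of_neg hk hω)
  simp only [ae_iff, not_lt, top_le_iff]
  refine measure_null_of_locally_null _ fun x _ => ?_
  obtain ⟨U, hU, hμU⟩ := μ.finiteAt_nhds x
  exact ⟨_, inter_mem_nhdsWithin _ (interior_mem_nhds.2 hU),
    hausdorffMeasure_eq_zero_of_upperDensity_eq_top hk hω isOpen_interior
      ((measure_mono interior_subset).trans_lt hμU).ne inter_subset_right fun y hy => hy.1⟩

end vitali

section normHausdorff

variable {X : Type*} [MetricSpace X] [MeasurableSpace X] [BorelSpace X] {k : ℝ}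

theorem smul_normHausdorff {t : ℝ} (ht : 0 ≤ t) :
    ENNReal.ofReal (2 ^ k * t) • normHausdorff X k =
      (ENNReal.ofReal t * ENNReal.ofReal (hausdorffNormalization k)) • μH[k] := by
  have h2k : (0 : ℝ) < 2 ^ k := Real.rpow_pos_of_pos two_pos k
  rw [normHausdorff, smul_smul, ← ENNReal.ofReal_mul (by positivity), ← ENNReal.ofReal_mul ht]
  congr 2
  field_simp

theorem ae_normHausdorff_upperDensity_lt_top [SeparableSpace X] {μ : Measure X}
    [IsLocallyFiniteMeasure μ] : ∀ᵐ x ∂normHausdorff X k, upperDensity k μ x < ∞ := by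
  rcases le_or_gt (hausdorffNormalization k) 0 with hω | hω
  · have h2k : (0 : ℝ) < 2 ^ k := Real.rpow_pos_of_pos two_pos k
    simp [normHausdorff, ENNReal.ofReal_of_nonpos (div_nonpos_of_nonpos_of_nonneg hω h2k.le)]
  · exact Measure.ae_smul_measure (ae_hausdorffMeasure_upperDensity_lt_top hω) _

end normHausdorff

theorem stmt_3_general {M : Type*} [MetricSpace M] [TopologicalSpace.SeparableSpace M]
    [MeasurableSpace M] [BorelSpace M]
    (μ : Measure M) [μ.Regular]
    (k t : ℝ) (ht : 0 < t) (E : Set M)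
    (hdens : ∀ x ∈ E, upperDensity k μ x ≤ ENNReal.ofReal t) :
    μ.restrict E ≤ ENNReal.ofReal (2 ^ k * t) • (normHausdorff M k).restrict E ∧
    ∀ᵐ x ∂(normHausdorff M k), upperDensity k μ x < ⊤ := by
  have := isLocallyFiniteMeasure_of_outerRegular μ
  refine ⟨?_, ae_normHausdorff_upperDensity_lt_top⟩
  rw [← Measure.restrict_smul, smul_normHausdorff ht.le]
  refine Measure.le_iff.2 fun s hs => ?_
  rw [Measure.restrict_apply hs, Measure.restrict_apply hs, Measure.smul_apply, smul_eq_mul]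
  exact measure_le_mul_hausdorffMeasure_of_upperDensity_le (ENNReal.ofReal_pos.2 ht).ne'
    ENNReal.ofReal_ne_top fun x hx => hdens x hx.2

/-- **Upper density upper bound implies measure upper bound.**
If μ is a Borel regular Radon measure on a separable metric space, E is Borel, t > 0,
and Θ*_k(μ,x) ≤ t for every x ∈ E, then μ ⌞ E ≤ 2^k·t·ℋ^k ⌞ E. In particular
Θ*_k(μ,x) < ∞ for ℋ^k-a.e. x ∈ M. -/
theorem stmt_3 {M : Type*} [MetricSpace M] [TopologicalSpace.SeparableSpace M]
    [MeasurableSpace M] [BorelSpace M]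
    (μ : Measure M) [μ.Regular]
    (k t : ℝ) (ht : 0 < t) (E : Set M) (hE : MeasurableSet E)
    (hdens : ∀ x ∈ E, upperDensity k μ x ≤ ENNReal.ofReal t) :
    μ.restrict E ≤ ENNReal.ofReal (2 ^ k * t) • (normHausdorff M k).restrict E ∧
    ∀ᵐ x ∂(normHausdorff M k), upperDensity k μ x < ⊤ :=
  stmt_3_general μ k t ht E hdens
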